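/- arXiv:2111.01863 — 2 statements merged into one kernel-verified Lean document; each statement's English description precedes it below -/
import Mathlib

section
/- Let n ≥ 2, let x = ⟨d,k,m⟩ be a nonzero element of M_n, and let j be a positive integer. Set d⁽ʲ⁾ = j·d, k⁽ʲ⁾ = k − (j−1)·min(0,d), and m⁽ʲ⁾ = m − (j−1)·max(0,d). Then the j-th matrix power x^j equals ⟨d⁽ʲ⁾, k⁽ʲ⁾, m⁽ʲ⁾⟩ if k⁽ʲ⁾ ≤ m⁽ʲ⁾, and equals the zero matrix if k⁽ʲ⁾ > m⁽ʲ⁾. -/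
open Matrix

/-- The n×n matrix ⟨d,k,m⟩: entry (i,j) (rows/columns numbered 1..n, here i.val+1, j.val+1)
equals 1 if k ≤ i ≤ m and j = i + d, and 0 otherwise. -/
def tripMat (n : ℕ) (d k m : ℤ) : Matrix (Fin n) (Fin n) ℕ :=
  Matrix.of fun i j =>
    if k ≤ (i.val : ℤ) + 1 ∧ (i.val : ℤ) + 1 ≤ m ∧ (j.val : ℤ) + 1 = (i.val : ℤ) + 1 + d
    then 1 else 0

/-- The monoid M_n, as a set of n×n matrices: the zero matrix together with all
matrices ⟨d,k,m⟩ with 1 - min(0,d) ≤ k ≤ m ≤ n - max(0,d). -/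
def MSet (n : ℕ) : Set (Matrix (Fin n) (Fin n) ℕ) :=
  {0} ∪ {x | ∃ d k m : ℤ,
    1 - min 0 d ≤ k ∧ k ≤ m ∧ m ≤ (n : ℤ) - max 0 d ∧ x = tripMat n d k m}

lemma tripMat_mul (n : ℕ) (d k m d' k' m' : ℤ) (hk' : 1 ≤ k') (hm' : m' ≤ (n : ℤ)) :
    tripMat n d k m * tripMat n d' k' m' =
      tripMat n (d + d') (max k (k' - d)) (min m (m' - d)) := by
  ext i j
  simp only [Matrix.mul_apply, tripMat, Matrix.of_apply]
  by_cases hC : max k (k' - d) ≤ (i.val : ℤ) + 1 ∧ (i.val : ℤ) + 1 ≤ min m (m' - d) ∧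
      (j.val : ℤ) + 1 = (i.val : ℤ) + 1 + (d + d')
  · rw [if_pos hC]
    obtain ⟨hC1, hC2, hC3⟩ := hC
    have hk1 : k ≤ (i.val : ℤ) + 1 := le_of_max_le_left hC1
    have hk2 : k' - d ≤ (i.val : ℤ) + 1 := le_of_max_le_right hC1
    have hm1 : (i.val : ℤ) + 1 ≤ m := le_trans hC2 (min_le_left _ _)
    have hm2 : (i.val : ℤ) + 1 ≤ m' - d := le_trans hC2 (min_le_right _ _)
    have hpos : (0 : ℤ) ≤ (i.val : ℤ) + d := by linarith
    have hlt : ((i.val : ℤ) + d).toNat < n := by omega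
    set l0 : Fin n := ⟨((i.val : ℤ) + d).toNat, hlt⟩ with hl0
    have hl0v : (l0.val : ℤ) = (i.val : ℤ) + d := by simp [hl0]; omega
    rw [Finset.sum_eq_single_of_mem l0 (Finset.mem_univ _)]
    · rw [if_pos ⟨hk1, hm1, by omega⟩, if_pos ⟨by omega, by omega, by omega⟩]
    · intro l _ hl
      by_cases hP : k ≤ (i.val : ℤ) + 1 ∧ (i.val : ℤ) + 1 ≤ m ∧
          (l.val : ℤ) + 1 = (i.val : ℤ) + 1 + d
      · exfalso
        apply hl
        apply Fin.ext
        have := hP.2.2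
        omega
      · rw [if_neg hP, zero_mul]
  · rw [if_neg hC]
    apply Finset.sum_eq_zero
    intro l _
    by_cases hP : k ≤ (i.val : ℤ) + 1 ∧ (i.val : ℤ) + 1 ≤ m ∧
        (l.val : ℤ) + 1 = (i.val : ℤ) + 1 + d
    · by_cases hQ : k' ≤ (l.val : ℤ) + 1 ∧ (l.val : ℤ) + 1 ≤ m' ∧
          (j.val : ℤ) + 1 = (l.val : ℤ) + 1 + d'
      · exfalso
        apply hC
        obtain ⟨p1, p2, p3⟩ := hP
        obtain ⟨q1, q2, q3⟩ := hQ
        exact ⟨max_le p1 (by omega), le_min p2 (by omega), by omega⟩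
      · rw [if_neg hQ, mul_zero]
    · rw [if_neg hP, zero_mul]

lemma tripMat_eq_zero (n : ℕ) (d k m : ℤ) (h : m < k) : tripMat n d k m = 0 := by
  ext i j
  simp only [tripMat, Matrix.of_apply, Matrix.zero_apply]
  rw [if_neg]
  rintro ⟨a, b, -⟩
  omega

lemma tripMat_pow (n : ℕ) (d k m : ℤ)
    (h1 : 1 - min 0 d ≤ k) (h3 : m ≤ (n : ℤ) - max 0 d)
    (j : ℕ) (hj : 1 ≤ j) :
    tripMat n d k m ^ j =
      tripMat n ((j : ℤ) * d) (k - ((j : ℤ) - 1) * min 0 d) (m - ((j : ℤ) - 1) * max 0 d) := by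
  have hk1 : (1 : ℤ) ≤ k := by
    have : min 0 d ≤ 0 := min_le_left _ _
    linarith
  have hmn : m ≤ (n : ℤ) := by
    have : (0 : ℤ) ≤ max 0 d := le_max_left _ _
    linarith
  induction j, hj using Nat.le_induction with
  | base => simp
  | succ j hj ih =>
    rw [pow_succ, ih, tripMat_mul n _ _ _ d k m hk1 hmn]
    have hjd : (0 : ℤ) ≤ (j : ℤ) := by positivity
    have e1 : (j : ℤ) * d + d = ((j : ℤ) + 1) * d := by ring
    have e2 : max (k - ((j : ℤ) - 1) * min 0 d) (k - (j : ℤ) * d)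
        = k - (((j : ℤ) + 1) - 1) * min 0 d := by
      rcases le_or_gt d 0 with hd | hd
      · rw [min_eq_right hd,
          max_eq_right (by nlinarith : k - ((j : ℤ) - 1) * d ≤ k - (j : ℤ) * d)]
        ring
      · rw [min_eq_left hd.le]
        simp only [mul_zero, sub_zero]
        rw [max_eq_left (by nlinarith : k - (j : ℤ) * d ≤ k)]
    have e3 : min (m - ((j : ℤ) - 1) * max 0 d) (m - (j : ℤ) * d)
        = m - (((j : ℤ) + 1) - 1) * max 0 d := by
      rcases le_or_gt d 0 with hd | hd
      · rw [max_eq_left hd]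
        simp only [mul_zero, sub_zero]
        rw [min_eq_left (by nlinarith : m ≤ m - (j : ℤ) * d)]
      · rw [max_eq_right hd.le,
          min_eq_right (by nlinarith : m - (j : ℤ) * d ≤ m - ((j : ℤ) - 1) * d)]
        ring
    rw [e1, e2, e3]
    push_cast
    ring_nf

/-- formula for powers of a nonzero element of M_n. -/
theorem stmt_2 (n : ℕ) (hn : 2 ≤ n) (d k m : ℤ)
    (h1 : 1 - min 0 d ≤ k) (h2 : k ≤ m) (h3 : m ≤ (n : ℤ) - max 0 d)
    (j : ℕ) (hj : 1 ≤ j) :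
    (k - ((j : ℤ) - 1) * min 0 d ≤ m - ((j : ℤ) - 1) * max 0 d →
      tripMat n d k m ^ j =
        tripMat n ((j : ℤ) * d) (k - ((j : ℤ) - 1) * min 0 d) (m - ((j : ℤ) - 1) * max 0 d)) ∧
    (m - ((j : ℤ) - 1) * max 0 d < k - ((j : ℤ) - 1) * min 0 d →
      tripMat n d k m ^ j = 0) := by
  refine ⟨fun _ => tripMat_pow n d k m h1 h3 j hj, fun h => ?_⟩
  rw [tripMat_pow n d k m h1 h3 j hj, tripMat_eq_zero _ _ _ _ h]
end

section
/- Let n ≥ 2. The set of idempotent elements of S_n = M_n \ {1} (i.e., elements x with x·x = x under matrix multiplication) is finite of cardinality n(n+1)/2. -/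
open Matrix

lemma trip_apply (n : ℕ) (d k m : ℤ) (i j : Fin n) :
    tripMat n d k m i j =
      if k ≤ (i.val : ℤ) + 1 ∧ (i.val : ℤ) + 1 ≤ m ∧ (j.val : ℤ) + 1 = (i.val : ℤ) + 1 + d
      then 1 else 0 := rfl

-- identity
lemma one_eq (n : ℕ) : (1 : Matrix (Fin n) (Fin n) ℕ) = tripMat n 0 1 (n : ℤ) := by
  ext i j
  rw [trip_apply, Matrix.one_apply]
  by_cases h : i = j
  · subst h
    rw [if_pos rfl, if_pos ⟨by omega, by have := i.isLt; omega, by ring⟩]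
  · rw [if_neg h, if_neg]
    rintro ⟨-, -, hc⟩
    exact h (Fin.ext (by omega)).symm

-- idempotence for d = 0
lemma trip_idem (n : ℕ) (k m : ℤ) :
    tripMat n 0 k m * tripMat n 0 k m = tripMat n 0 k m := by
  ext i j
  rw [Matrix.mul_apply]
  simp only [trip_apply]
  by_cases hP : k ≤ (i.val : ℤ) + 1 ∧ (i.val : ℤ) + 1 ≤ m
  · rw [Finset.sum_eq_single i]
    · rw [if_pos ⟨hP.1, hP.2, by ring⟩, one_mul]
    · intro l _ hl
      rw [if_neg, zero_mul]
      rintro ⟨-, -, hc⟩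
      exact hl (Fin.ext (by omega))
    · simp
  · rw [Finset.sum_eq_zero, eq_comm, if_neg (by tauto)]
    intro l _
    rw [if_neg (by tauto), zero_mul]

-- d ≠ 0 not idempotent, given range constraints
lemma trip_not_idem (n : ℕ) (d k m : ℤ) (hd : d ≠ 0)
    (h1 : 1 - min 0 d ≤ k) (h2 : k ≤ m) (h3 : m ≤ (n : ℤ) - max 0 d) :
    tripMat n d k m * tripMat n d k m ≠ tripMat n d k m := by
  have hk1 : 1 ≤ k := by omega
  have hkn : k ≤ (n : ℤ) := by omega
  have hkd1 : 1 ≤ k + d := by omega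
  have hkdn : k + d ≤ (n : ℤ) := by omega
  set i : Fin n := ⟨(k - 1).toNat, by omega⟩
  set j : Fin n := ⟨(k + d - 1).toNat, by omega⟩
  have hi : (i.val : ℤ) + 1 = k := by simp [i]; omega
  have hj : (j.val : ℤ) + 1 = k + d := by simp [j]; omega
  intro hc
  have := congrFun (congrFun hc i) j
  rw [Matrix.mul_apply] at this
  simp only [trip_apply] at this
  rw [Finset.sum_eq_zero, if_pos ⟨by omega, by omega, by omega⟩] at this
  · exact absurd this (by norm_num)
  · intro l _
    by_cases hl2 : k ≤ (l.val : ℤ) + 1 ∧ (l.val : ℤ) + 1 ≤ m ∧ ((k + d - 1).toNat : ℤ) + 1 = (l.val : ℤ) + 1 + d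
    · rw [mul_eq_zero]
      left
      rw [if_neg]
      rintro ⟨-, -, hc2⟩
      omega
    · rw [mul_eq_zero]
      right
      rw [if_neg hl2]

lemma trip_diag (n : ℕ) (k m : ℤ) (i : Fin n) :
    tripMat n 0 k m i i = if k ≤ (i.val : ℤ) + 1 ∧ (i.val : ℤ) + 1 ≤ m then 1 else 0 := by
  rw [trip_apply]
  by_cases h : k ≤ (i.val : ℤ) + 1 ∧ (i.val : ℤ) + 1 ≤ m
  · rw [if_pos ⟨h.1, h.2, by ring⟩, if_pos h]
  · rw [if_neg (by tauto), if_neg h]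

lemma trip_inj (n : ℕ) (k m k' m' : ℤ) (h1 : 1 ≤ k) (h2 : k ≤ m) (h3 : m ≤ (n : ℤ))
    (h1' : 1 ≤ k') (h2' : k' ≤ m') (h3' : m' ≤ (n : ℤ))
    (heq : tripMat n 0 k m = tripMat n 0 k' m') : k = k' ∧ m = m' := by
  have key : ∀ t : ℤ, 1 ≤ t → t ≤ (n : ℤ) → ((k ≤ t ∧ t ≤ m) ↔ (k' ≤ t ∧ t ≤ m')) := by
    intro t ht1 ht2
    set i : Fin n := ⟨(t - 1).toNat, by omega⟩
    have hi : (i.val : ℤ) + 1 = t := by simp [i]; omega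
    have := congrFun (congrFun heq i) i
    rw [trip_diag, trip_diag] at this
    constructor <;> intro h
    · by_contra hc
      rw [if_pos (by omega), if_neg (by omega)] at this
      simp at this
    · by_contra hc
      rw [if_neg (by omega), if_pos (by omega)] at this
      simp at this
  have a1 := (key k h1 (by omega)).mp ⟨le_refl _, h2⟩
  have a2 := (key k' h1' (by omega)).mpr ⟨le_refl _, h2'⟩
  have a3 := (key m (by omega) h3).mp ⟨h2, le_refl _⟩
  have a4 := (key m' (by omega) h3').mpr ⟨h2', le_refl _⟩
  omega

lemma trip_ne_zero (n : ℕ) (k m : ℤ) (h1 : 1 ≤ k) (h2 : k ≤ m) (h3 : m ≤ (n : ℤ)) :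
    tripMat n 0 k m ≠ 0 := by
  intro hc
  set i : Fin n := ⟨(k - 1).toNat, by omega⟩
  have hi : (i.val : ℤ) + 1 = k := by simp [i]; omega
  have := congrFun (congrFun hc i) i
  rw [trip_diag, if_pos (by omega)] at this
  simp at this

lemma zero_ne_one'' (n : ℕ) (hn : 2 ≤ n) : (0 : Matrix (Fin n) (Fin n) ℕ) ≠ 1 := by
  intro hc
  have := congrFun (congrFun hc ⟨0, by omega⟩) ⟨0, by omega⟩
  rw [Matrix.one_apply_eq] at this
  exact one_ne_zero this.symm


lemma gauss (N : ℕ) : 2 * (∑ b ∈ Finset.Icc (1 : ℤ) (N : ℤ), b.toNat) = N * (N + 1) := by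
  induction N with
  | zero => simp
  | succ N ih =>
    have h : Finset.Icc (1 : ℤ) ((N + 1 : ℕ) : ℤ) =
        insert ((N : ℤ) + 1) (Finset.Icc (1 : ℤ) (N : ℤ)) := by
      ext x; simp; omega
    rw [h, Finset.sum_insert (by simp)]
    have h2 : (((N : ℤ) + 1).toNat : ℤ) = (N : ℤ) + 1 := by omega
    have h3 : ((N : ℤ) + 1).toNat = N + 1 := by omega
    rw [h3, Nat.mul_add, ih]
    ring

lemma tri_card (n : ℕ) :
    (((Finset.Icc (1:ℤ) (n:ℤ)) ×ˢ (Finset.Icc (1:ℤ) (n:ℤ))).filter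
      (fun p => p.1 ≤ p.2)).card = n * (n + 1) / 2 := by
  rw [Finset.card_eq_sum_card_fiberwise
    (f := Prod.snd) (t := Finset.Icc (1:ℤ) (n:ℤ))
    (fun x hx => by simp at hx ⊢; omega)]
  have hfib : ∀ b ∈ Finset.Icc (1:ℤ) (n:ℤ),
      ((((Finset.Icc (1:ℤ) (n:ℤ)) ×ˢ (Finset.Icc (1:ℤ) (n:ℤ))).filter
        (fun p => p.1 ≤ p.2)).filter (fun p => p.2 = b)).card = b.toNat := by
    intro b hb
    simp only [Finset.mem_Icc] at hb
    have : (((Finset.Icc (1:ℤ) (n:ℤ)) ×ˢ (Finset.Icc (1:ℤ) (n:ℤ))).filter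
        (fun p => p.1 ≤ p.2)).filter (fun p => p.2 = b) =
        (Finset.Icc (1:ℤ) b) ×ˢ {b} := by
      ext p
      simp only [Finset.mem_filter, Finset.mem_product, Finset.mem_Icc, Finset.mem_singleton]
      omega
    rw [this, Finset.card_product, Finset.card_singleton, Int.card_Icc]
    omega
  rw [Finset.sum_congr rfl hfib]
  show (∑ b ∈ Finset.Icc (1:ℤ) (n:ℤ), b.toNat) = n * (n + 1) / 2
  have := gauss n
  omega

/-- the set of idempotents of S_n = M_n \ {1} has exactly n(n+1)/2 elements. -/
theorem stmt_9 (n : ℕ) (hn : 2 ≤ n) :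
    ({x ∈ MSet n \ {1} | x * x = x}).Finite ∧
    ({x ∈ MSet n \ {1} | x * x = x}).ncard = n * (n + 1) / 2 := by
  set T' : Finset (ℤ × ℤ) :=
    ((Finset.Icc (1:ℤ) (n:ℤ)) ×ˢ (Finset.Icc (1:ℤ) (n:ℤ))).filter (fun p => p.1 ≤ p.2)
    with hT'
  set T : Finset (ℤ × ℤ) := T'.erase (1, (n:ℤ)) with hT
  have hmemT' : (1, (n:ℤ)) ∈ T' := by
    simp only [hT', Finset.mem_filter, Finset.mem_product, Finset.mem_Icc]
    refine ⟨⟨⟨le_refl _, by exact_mod_cast Nat.one_le_of_lt hn⟩, ?_⟩, ?_⟩ <;> simp <;> omega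
  have hTcard : T.card = n * (n + 1) / 2 - 1 := by
    rw [hT, Finset.card_erase_of_mem hmemT', hT', tri_card n]
  have hset : {x ∈ MSet n \ {1} | x * x = x} =
      insert (0 : Matrix (Fin n) (Fin n) ℕ)
        ((fun p : ℤ × ℤ => tripMat n 0 p.1 p.2) '' (T : Set (ℤ × ℤ))) := by
    ext x
    simp only [Set.mem_setOf_eq, Set.mem_diff, Set.mem_singleton_iff, Set.mem_insert_iff,
      Set.mem_image, Finset.coe_erase, Finset.mem_coe]
    constructor
    · rintro ⟨⟨hM, hx1⟩, hidem⟩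
      rcases hM with h0 | ⟨d, k, m, h1, h2, h3, rfl⟩
      · left; exact h0
      · rcases eq_or_ne d 0 with rfl | hd
        · right
          refine ⟨(k, m), ?_, rfl⟩
          rw [hT, Finset.mem_erase]
          constructor
          · intro hc
            apply hx1
            rw [one_eq n]
            have h5 : k = 1 := congrArg Prod.fst hc
            have h6 : m = (n:ℤ) := congrArg Prod.snd hc
            rw [h5, h6]
          · rw [hT', Finset.mem_filter, Finset.mem_product, Finset.mem_Icc, Finset.mem_Icc]
            simp at h1 h3
            exact ⟨⟨⟨by omega, by omega⟩, ⟨by omega, by omega⟩⟩, h2⟩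
        · exact absurd hidem (trip_not_idem n d k m hd h1 h2 h3)
    · rintro (rfl | ⟨⟨k, m⟩, hmem, rfl⟩)
      · refine ⟨⟨Or.inl rfl, ?_⟩, by simp⟩
        exact zero_ne_one'' n hn
      · rw [hT, Finset.mem_erase, hT', Finset.mem_filter, Finset.mem_product,
          Finset.mem_Icc, Finset.mem_Icc] at hmem
        obtain ⟨hne, ⟨⟨hk1, hkn⟩, hm1, hmn⟩, hkm⟩ := hmem
        refine ⟨⟨Or.inr ⟨0, k, m, by simp; omega, hkm, by simp; omega, rfl⟩, ?_⟩,
          trip_idem n k m⟩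
        intro hc
        rw [one_eq n] at hc
        have hj := trip_inj n k m 1 (n:ℤ) hk1 hkm hmn le_rfl
          (by exact_mod_cast Nat.one_le_of_lt hn) le_rfl hc
        exact hne (Prod.ext hj.1 hj.2)
  have h0not : (0 : Matrix (Fin n) (Fin n) ℕ) ∉
      ((fun p : ℤ × ℤ => tripMat n 0 p.1 p.2) '' (T : Set (ℤ × ℤ))) := by
    rintro ⟨⟨k, m⟩, hmem, hc⟩
    rw [Finset.mem_coe, Finset.mem_erase, hT', Finset.mem_filter, Finset.mem_product,
      Finset.mem_Icc, Finset.mem_Icc] at hmem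
    exact trip_ne_zero n k m hmem.2.1.1.1 hmem.2.2 hmem.2.1.2.2 hc
  have hinj : Set.InjOn (fun p : ℤ × ℤ => tripMat n 0 p.1 p.2) (T : Set (ℤ × ℤ)) := by
    rintro ⟨k, m⟩ hmem ⟨k', m'⟩ hmem' hc
    rw [Finset.mem_coe, Finset.mem_erase, hT', Finset.mem_filter, Finset.mem_product,
      Finset.mem_Icc, Finset.mem_Icc] at hmem hmem'
    have := trip_inj n k m k' m' hmem.2.1.1.1 hmem.2.2 hmem.2.1.2.2
      hmem'.2.1.1.1 hmem'.2.2 hmem'.2.1.2.2 hc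
    exact Prod.ext this.1 this.2
  have hfinimg : ((fun p : ℤ × ℤ => tripMat n 0 p.1 p.2) '' (T : Set (ℤ × ℤ))).Finite :=
    (T.finite_toSet).image _
  constructor
  · rw [hset]; exact hfinimg.insert _
  · rw [hset, Set.ncard_insert_of_notMem h0not hfinimg,
      Set.ncard_image_of_injOn hinj, Set.ncard_coe_finset, hTcard]
    have h3 : 3 ≤ n * (n + 1) / 2 := by
      calc 3 = 2 * (2 + 1) / 2 := by norm_num
      _ ≤ n * (n + 1) / 2 := by
        apply Nat.div_le_div_right
        exact Nat.mul_le_mul hn (by omega)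
    omega
end
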